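/- Let G be a (possibly infinite) graph, let s, t ∈ V(G) be distinct, and let 𝒫 be a system of pairwise edge-disjoint st-paths. Then either there exists an st-cut C orthogonal to 𝒫, or there is another system 𝒬 of pairwise edge-disjoint st-paths such that δ_𝒬(s) properly contains δ_𝒫(s) with exactly one new edge, and δ_𝒬(t) properly contains δ_𝒫(t) with exactly one new edge. -/

import Mathlib

/-!
Common definitions: multigraphs (parallel edges allowed, no loops), walks,
paths, cuts, waves and related notions used in the statements below.
-/

universe u v

/-- A multigraph with vertex type `V` and edge type `E`: every edge is assigned
an unordered pair of *distinct* end-vertices (parallel edges allowed, no loops). -/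
structure Multigraph (V : Type u) (E : Type v) : Type (max u v) where
  inc : E → Sym2 V
  not_isDiag : ∀ e, ¬ (inc e).IsDiag

namespace Multigraph

variable {V : Type u} {E : Type v}

/-- Walks in a multigraph, recorded together with the edges they traverse. -/
inductive Walk (G : Multigraph V E) : V → V → Type (max u v)
  | nil (v : V) : Walk G v v
  | cons {u v w : V} (e : E) (he : G.inc e = s(u, v)) (p : Walk G v w) : Walk G u w

namespace Walk

variable {G : Multigraph V E}

/-- The list of vertices visited by a walk. -/
def support : ∀ {u w : V}, G.Walk u w → List V
  | _, _, .nil v => [v]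
  | u, _, .cons _ _ p => u :: p.support

/-- The list of edges traversed by a walk. -/
def edges : ∀ {u w : V}, G.Walk u w → List E
  | _, _, .nil _ => []
  | _, _, .cons e _ p => e :: p.edges

end Walk

/-- `δ_G(v)`: the set of edges incident with the vertex `v`. -/
def inci (G : Multigraph V E) (v : V) : Set E := {e | v ∈ G.inc e}

/-- `δ_G(X)`: the set of edges with exactly one end-vertex in `X`. -/
def cut (G : Multigraph V E) (X : Set V) : Set E :=
  {e | ∃ x y, G.inc e = s(x, y) ∧ x ∈ X ∧ y ∉ X}

/-- Connectedness of a multigraph. -/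
def Connected (G : Multigraph V E) : Prop := ∀ u v : V, Nonempty (G.Walk u v)

/-- A `T`-path: a path connecting two distinct vertices of `T`
with no internal vertex in `T`. -/
structure TPath (G : Multigraph V E) (T : Set V) : Type (max u v) where
  first : V
  last : V
  walk : G.Walk first last
  first_mem : first ∈ T
  last_mem : last ∈ T
  ne : first ≠ last
  support_nodup : walk.support.Nodup
  internal : ∀ x ∈ walk.support, x ∈ T → x = first ∨ x = last

/-- A system of pairwise edge-disjoint `T`-paths. -/
def TPathDisjoint (G : Multigraph V E) {T : Set V} (P : Set (G.TPath T)) : Prop :=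
  ∀ p ∈ P, ∀ q ∈ P, p ≠ q → ∀ e, e ∈ p.walk.edges → e ∉ q.walk.edges

/-- An `st`-path: a path from `s` to `t` (no internal vertex is `s` or `t`,
which is automatic as the vertices of a path are distinct). -/
structure STPath (G : Multigraph V E) (s t : V) : Type (max u v) where
  walk : G.Walk s t
  support_nodup : walk.support.Nodup

/-- A system of pairwise edge-disjoint `st`-paths. -/
def STPathDisjoint (G : Multigraph V E) {s t : V} (P : Set (G.STPath s t)) : Prop :=
  ∀ p ∈ P, ∀ q ∈ P, p ≠ q → ∀ e, e ∈ p.walk.edges → e ∉ q.walk.edges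

/-- A nontrivial path starting at `s`. -/
structure SPath (G : Multigraph V E) (s : V) : Type (max u v) where
  last : V
  walk : G.Walk s last
  support_nodup : walk.support.Nodup
  edges_ne_nil : walk.edges ≠ []

/-- A system of pairwise edge-disjoint paths starting at `s`. -/
def SPathDisjoint (G : Multigraph V E) {s : V} (W : Set (G.SPath s)) : Prop :=
  ∀ p ∈ W, ∀ q ∈ W, p ≠ q → ∀ e, e ∈ p.walk.edges → e ∉ q.walk.edges

/-- The set of last edges of a system of paths starting at `s`. -/
def lastEdges (G : Multigraph V E) {s : V} (W : Set (G.SPath s)) : Set E :=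
  {e | ∃ p ∈ W, p.walk.edges.getLast? = some e}

/-- `C` is a cut separating `A` from `B`. -/
def SepCut (G : Multigraph V E) (A B : Set V) (C : Set E) : Prop :=
  ∃ X : Set V, A ⊆ X ∧ (∀ b ∈ B, b ∉ X) ∧ C = G.cut X

/-- `C` is a `⊆`-minimal cut separating `A` from `B`. -/
def IsMinSepCut (G : Multigraph V E) (A B : Set V) (C : Set E) : Prop :=
  G.SepCut A B C ∧ ∀ D : Set E, G.SepCut A B D → D ⊆ C → D = C

/-- An `s`-`B`-wave: a system of pairwise edge-disjoint paths starting at `s`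
whose set of last edges is a `⊆`-minimal cut separating `s` from `B`. -/
def IsWave (G : Multigraph V E) (s : V) (B : Set V) (W : Set (G.SPath s)) : Prop :=
  G.SPathDisjoint W ∧ G.IsMinSepCut {s} B (G.lastEdges W)

/-- An Erdős–Menger `st`-cut: an `st`-cut which is orthogonal to some system of
pairwise edge-disjoint `st`-paths, i.e. it consists of exactly one edge chosen
from each path of the system. -/
def IsEMCut (G : Multigraph V E) (s t : V) (C : Set E) : Prop :=
  (∃ X : Set V, s ∈ X ∧ t ∉ X ∧ C = G.cut X) ∧
  ∃ P : Set (G.STPath s t), G.STPathDisjoint P ∧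
    (∀ p ∈ P, ∃! e, e ∈ C ∧ e ∈ p.walk.edges) ∧
    (∀ e ∈ C, ∃ p ∈ P, e ∈ p.walk.edges)

/-- The order `≼` on `st`-cuts: the `s`-side of `C` is contained in the
`s`-side of `D` (in a connected graph the `s`-side is unique). -/
def CutLE (G : Multigraph V E) (s t : V) (C D : Set E) : Prop :=
  ∃ X Y : Set V, s ∈ X ∧ t ∉ X ∧ C = G.cut X ∧ s ∈ Y ∧ t ∉ Y ∧ D = G.cut Y ∧ X ⊆ Y

/-- A cut of the form `C_W` for some `st`-wave `W`. -/
def IsWaveCut (G : Multigraph V E) (s t : V) (C : Set E) : Prop :=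
  ∃ W : Set (G.SPath s), G.IsWave s {t} W ∧ G.lastEdges W = C

/-- Deletion of a set of edges. -/
def deleteEdges (G : Multigraph V E) (F : Set E) : Multigraph V {e : E // e ∉ F} where
  inc e := G.inc e.1
  not_isDiag e := G.not_isDiag e.1

open Classical in
/-- Contraction of the vertex set `X` to the vertex `s` (edges inside `X` are
deleted, edges leaving `X` are redirected to `s`). -/
noncomputable def contract (G : Multigraph V E) (X : Set V) (s : V) :
    Multigraph V {e : E // ¬ (Sym2.map (fun v => if v ∈ X then s else v) (G.inc e)).IsDiag} where
  inc e := Sym2.map (fun v => if v ∈ X then s else v) (G.inc e.1)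
  not_isDiag e := e.2

/-- Reachability inside a set `S` of vertices. -/
def ReachableIn (G : Multigraph V E) (S : Set V) (x y : V) : Prop :=
  ∃ p : G.Walk x y, ∀ z ∈ p.support, z ∈ S

/-- `Y` is (the vertex set of) a connected component of the subgraph of `G`
induced by `S`. -/
def IsComponentOf (G : Multigraph V E) (Y S : Set V) : Prop :=
  Y.Nonempty ∧ Y ⊆ S ∧ ∀ x ∈ Y, ∀ y ∈ S, (G.ReachableIn S x y ↔ y ∈ Y)

/-- A cycle in a multigraph (a closed walk with distinct edges whose
vertices are distinct except that the first one equals the last one). -/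
structure Cycle (G : Multigraph V E) : Type (max u v) where
  base : V
  walk : G.Walk base base
  edges_ne_nil : walk.edges ≠ []
  edges_nodup : walk.edges.Nodup
  support_tail_nodup : walk.support.tail.Nodup

/-- A graph is Eulerian if its edge set can be partitioned into
edge sets of cycles. -/
def IsEulerian (G : Multigraph V E) : Prop :=
  ∃ C : Set G.Cycle,
    (∀ c ∈ C, ∀ d ∈ C, c ≠ d → ∀ e, e ∈ c.walk.edges → e ∉ d.walk.edges) ∧
    ∀ e : E, ∃ c ∈ C, e ∈ c.walk.edges

/-- A `T`-partition: a family `{A t : t ∈ T}` of pairwise disjoint vertex sets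
with `A t ∩ T = {t}`. -/
def IsTPartition (T : Set V) (A : V → Set V) : Prop :=
  (∀ t ∈ T, A t ∩ T = {t}) ∧
  ∀ t₁ ∈ T, ∀ t₂ ∈ T, t₁ ≠ t₂ → Disjoint (A t₁) (A t₂)

end Multigraph

/-!
Work in the residual graph of `P`, in which an edge on no path of `P` may be traversed either
way and an edge of a path of `P` only against the direction of that path. Let `X` be the set of
vertices reachable from `s` in it. If `t ∉ X`, then every edge of `δ(X)` lies on a path of `P`
(a free edge leaving `X` would be residual), and a path of `P` never re-enters `X` (the reverse
step would be residual), so it crosses `δ(X)` exactly once.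

If `t ∈ X`, take a residual `st`-path `W` and induct on the number of its edges used by `P`. If
there are none, add `W` to `P`. Otherwise let `e` be the last one, used backwards by `q ∈ P`:
cutting `W` and `q` at `e` and exchanging their tails gives a new path in place of `q` and a
residual path using fewer edges of the new system. Since every path has exactly one edge at each
end, the edges at `s` and at `t` of the paths together with the residual path are unchanged.
-/

namespace Multigraph

structure Dart (V : Type u) (E : Type v) where
  edge : E
  src : V
  tgt : V

def Dart.symm {V : Type u} {E : Type v} (d : Dart V E) : Dart V E := ⟨d.edge, d.tgt, d.src⟩

variable {V : Type u} {E : Type v} {G : Multigraph V E}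

theorem mem_cut_iff_of_inc_eq {X : Set V} {e : E} {x y : V} (he : G.inc e = s(x, y)) :
    e ∈ G.cut X ↔ (x ∈ X ∧ y ∉ X) ∨ (y ∈ X ∧ x ∉ X) := by
  constructor
  · rintro ⟨x', y', he', hx', hy'⟩
    rcases Sym2.eq_iff.mp (he.symm.trans he') with ⟨rfl, rfl⟩ | ⟨rfl, rfl⟩
    exacts [Or.inl ⟨hx', hy'⟩, Or.inr ⟨hx', hy'⟩]
  · rintro (⟨hx, hy⟩ | ⟨hy, hx⟩)
    exacts [⟨x, y, he, hx, hy⟩, ⟨y, x, he.trans Sym2.eq_swap, hy, hx⟩]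

namespace Walk

variable {u v w : V}

def append : ∀ {u v w : V}, G.Walk u v → G.Walk v w → G.Walk u w
  | _, _, _, .nil _, q => q
  | _, _, _, .cons e he p, q => .cons e he (p.append q)

def darts : ∀ {u w : V}, G.Walk u w → List (Dart V E)
  | _, _, .nil _ => []
  | u, _, @cons _ _ _ _ x _ e _ p => ⟨e, u, x⟩ :: p.darts

def edgeSet (p : G.Walk u w) : Set E := {e | e ∈ p.edges}

@[simp] theorem mem_edgeSet {p : G.Walk u w} {e : E} : e ∈ p.edgeSet ↔ e ∈ p.edges := Iff.rfl

@[simp] theorem darts_nil : (nil v : G.Walk v v).darts = [] := rfl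

@[simp] theorem darts_cons {x : V} (e : E) (he : G.inc e = s(u, x)) (p : G.Walk x w) :
    (cons e he p).darts = ⟨e, u, x⟩ :: p.darts := rfl

@[simp] theorem edges_cons {x : V} (e : E) (he : G.inc e = s(u, x)) (p : G.Walk x w) :
    (cons e he p).edges = e :: p.edges := rfl

@[simp] theorem support_cons {x : V} (e : E) (he : G.inc e = s(u, x)) (p : G.Walk x w) :
    (cons e he p).support = u :: p.support := rfl

theorem support_eq_cons : ∀ {u w : V} (p : G.Walk u w), p.support = u :: p.support.tail
  | _, _, .nil _ => rfl
  | _, _, .cons _ _ _ => rfl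

theorem start_mem_support (p : G.Walk u w) : u ∈ p.support := by
  rw [support_eq_cons]; exact List.mem_cons_self

theorem support_eq_dropLast_concat : ∀ {u w : V} (p : G.Walk u w),
    p.support = p.support.dropLast ++ [w]
  | _, _, .nil _ => rfl
  | _, _, .cons _ _ p => by
    rw [support_cons, support_eq_dropLast_concat p, ← List.cons_append, List.dropLast_concat]

theorem end_mem_support (p : G.Walk u w) : w ∈ p.support := by
  rw [support_eq_dropLast_concat]; simp

theorem darts_append : ∀ {u v w : V} (p : G.Walk u v) (q : G.Walk v w),
    (p.append q).darts = p.darts ++ q.darts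
  | _, _, _, .nil _, _ => rfl
  | _, _, _, .cons _ _ p, q => by simp [append, darts_append p q]

theorem edges_append : ∀ {u v w : V} (p : G.Walk u v) (q : G.Walk v w),
    (p.append q).edges = p.edges ++ q.edges
  | _, _, _, .nil _, _ => rfl
  | _, _, _, .cons _ _ p, q => by simp [append, edges_append p q]

theorem support_append : ∀ {u v w : V} (p : G.Walk u v) (q : G.Walk v w),
    (p.append q).support = p.support ++ q.support.tail
  | _, _, _, .nil _, q => support_eq_cons q
  | _, _, _, .cons _ _ p, q => by simp [append, support_append p q]

theorem map_edge_darts : ∀ {u w : V} (p : G.Walk u w), p.darts.map Dart.edge = p.edges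
  | _, _, .nil _ => rfl
  | _, _, .cons _ _ p => by simp [map_edge_darts p]

theorem map_src_darts : ∀ {u w : V} (p : G.Walk u w), p.darts.map Dart.src = p.support.dropLast
  | _, _, .nil _ => rfl
  | _, _, .cons _ _ p => by
    rw [darts_cons, support_cons, support_eq_cons p, List.dropLast_cons_cons, ← support_eq_cons p,
      List.map_cons, map_src_darts p]

theorem map_tgt_darts : ∀ {u w : V} (p : G.Walk u w), p.darts.map Dart.tgt = p.support.tail
  | _, _, .nil _ => rfl
  | _, _, .cons _ _ p => by
    rw [darts_cons, support_cons, List.map_cons, map_tgt_darts p, List.tail_cons,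
      ← support_eq_cons p]

theorem mem_edges_iff {p : G.Walk u w} {e : E} : e ∈ p.edges ↔ ∃ d ∈ p.darts, d.edge = e := by
  rw [← map_edge_darts, List.mem_map]

theorem inc_of_mem_darts : ∀ {u w : V} {p : G.Walk u w} {d : Dart V E}, d ∈ p.darts →
    G.inc d.edge = s(d.src, d.tgt)
  | _, _, .nil _, _, h => by simp at h
  | _, _, .cons _ he p, _, h => by
    rcases List.mem_cons.mp h with rfl | h
    exacts [he, inc_of_mem_darts h]

theorem src_mem_support {p : G.Walk u w} {d : Dart V E} (h : d ∈ p.darts) : d.src ∈ p.support :=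
  List.dropLast_subset _ (map_src_darts p ▸ List.mem_map_of_mem h)

theorem tgt_mem_support {p : G.Walk u w} {d : Dart V E} (h : d ∈ p.darts) : d.tgt ∈ p.support :=
  List.mem_of_mem_tail (map_tgt_darts p ▸ List.mem_map_of_mem h)

theorem mem_support_of_mem_edges {p : G.Walk u w} {e : E} {x : V} (he : e ∈ p.edges)
    (hx : x ∈ G.inc e) : x ∈ p.support := by
  obtain ⟨d, hd, rfl⟩ := mem_edges_iff.mp he
  rw [inc_of_mem_darts hd, Sym2.mem_iff] at hx
  rcases hx with rfl | rfl
  exacts [src_mem_support hd, tgt_mem_support hd]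

theorem edges_nodup_of_support_nodup : ∀ {u w : V} {p : G.Walk u w},
    p.support.Nodup → p.edges.Nodup
  | _, _, .nil _, _ => List.nodup_nil
  | _, _, .cons _ he p, h => by
    rw [support_cons, List.nodup_cons] at h
    refine List.nodup_cons.mpr ⟨fun hp => h.1 ?_, edges_nodup_of_support_nodup h.2⟩
    exact mem_support_of_mem_edges hp (he ▸ Sym2.mem_mk_left _ _)

theorem tgt_ne_start {p : G.Walk u w} (hp : p.support.Nodup) {d : Dart V E} (hd : d ∈ p.darts) :
    d.tgt ≠ u := by
  rw [support_eq_cons, List.nodup_cons] at hp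
  rintro rfl
  exact hp.1 (map_tgt_darts p ▸ List.mem_map_of_mem hd)

theorem src_ne_end {p : G.Walk u w} (hp : p.support.Nodup) {d : Dart V E} (hd : d ∈ p.darts) :
    d.src ≠ w := by
  rw [support_eq_dropLast_concat, List.nodup_append] at hp
  rintro rfl
  exact hp.2.2 _ (map_src_darts p ▸ List.mem_map_of_mem hd) _ (List.mem_singleton_self _) rfl

theorem eq_of_src_eq {p : G.Walk u w} (hp : p.support.Nodup) {d d' : Dart V E}
    (hd : d ∈ p.darts) (hd' : d' ∈ p.darts) (h : d.src = d'.src) : d = d' :=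
  List.inj_on_of_nodup_map (by rw [map_src_darts]; exact hp.sublist (List.dropLast_sublist _))
    hd hd' h

theorem eq_of_tgt_eq {p : G.Walk u w} (hp : p.support.Nodup) {d d' : Dart V E}
    (hd : d ∈ p.darts) (hd' : d' ∈ p.darts) (h : d.tgt = d'.tgt) : d = d' :=
  List.inj_on_of_nodup_map (by rw [map_tgt_darts]; exact hp.sublist (List.tail_sublist _))
    hd hd' h

theorem eq_of_edge_eq {p : G.Walk u w} (hp : p.edges.Nodup) {d d' : Dart V E}
    (hd : d ∈ p.darts) (hd' : d' ∈ p.darts) (h : d.edge = d'.edge) : d = d' :=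
  List.inj_on_of_nodup_map (by rwa [map_edge_darts]) hd hd' h

theorem exists_src_eq_start_of_ne : ∀ {u w : V} (p : G.Walk u w), u ≠ w → ∃ d ∈ p.darts, d.src = u
  | _, _, .nil _, h => absurd rfl h
  | _, _, .cons _ _ _, _ => ⟨_, List.mem_cons_self, rfl⟩

theorem exists_tgt_eq_end_of_ne : ∀ {u w : V} (p : G.Walk u w), u ≠ w → ∃ d ∈ p.darts, d.tgt = w
  | _, _, .nil _, h => absurd rfl h
  | _, w, @cons _ _ _ _ x _ _ _ p, _ => by
    by_cases hx : x = w
    · exact ⟨_, List.mem_cons_self, hx⟩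
    · obtain ⟨d, hd, hdw⟩ := exists_tgt_eq_end_of_ne p hx
      exact ⟨d, List.mem_cons_of_mem _ hd, hdw⟩

theorem src_eq_start_of_mem_inc {p : G.Walk u w} (hp : p.support.Nodup) {d : Dart V E}
    (hd : d ∈ p.darts) (hu : u ∈ G.inc d.edge) : d.src = u := by
  rw [inc_of_mem_darts hd, Sym2.mem_iff] at hu
  exact hu.resolve_right (tgt_ne_start hp hd).symm |>.symm

theorem tgt_eq_end_of_mem_inc {p : G.Walk u w} (hp : p.support.Nodup) {d : Dart V E}
    (hd : d ∈ p.darts) (hw : w ∈ G.inc d.edge) : d.tgt = w := by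
  rw [inc_of_mem_darts hd, Sym2.mem_iff] at hw
  exact hw.resolve_left (src_ne_end hp hd).symm |>.symm

theorem exists_inci_inter_edgeSet_eq_singleton {p : G.Walk u w} (hp : p.support.Nodup)
    (huw : u ≠ w) (hv : v = u ∨ v = w) : ∃ e, G.inci v ∩ p.edgeSet = {e} := by
  rcases hv with rfl | rfl
  · obtain ⟨d, hd, hdu⟩ := exists_src_eq_start_of_ne p huw
    refine ⟨d.edge, Set.eq_singleton_iff_unique_mem.mpr ⟨⟨?_, mem_edges_iff.mpr ⟨d, hd, rfl⟩⟩, ?_⟩⟩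
    · simp [inci, inc_of_mem_darts hd, hdu]
    · rintro _ ⟨hv, he⟩
      obtain ⟨d', hd', rfl⟩ := mem_edges_iff.mp he
      rw [eq_of_src_eq hp hd' hd ((src_eq_start_of_mem_inc hp hd' hv).trans hdu.symm)]
  · obtain ⟨d, hd, hdw⟩ := exists_tgt_eq_end_of_ne p huw
    refine ⟨d.edge, Set.eq_singleton_iff_unique_mem.mpr ⟨⟨?_, mem_edges_iff.mpr ⟨d, hd, rfl⟩⟩, ?_⟩⟩
    · simp [inci, inc_of_mem_darts hd, hdw]
    · rintro _ ⟨hv, he⟩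
      obtain ⟨d', hd', rfl⟩ := mem_edges_iff.mp he
      rw [eq_of_tgt_eq hp hd' hd ((tgt_eq_end_of_mem_inc hp hd' hv).trans hdw.symm)]

theorem inci_inter_edgeSet_eq {u' w' : V} {p : G.Walk u w} {p' : G.Walk u' w'}
    (hp : p.support.Nodup) (hp' : p'.support.Nodup) (huw : u ≠ w) (huw' : u' ≠ w')
    (hv : v = u ∨ v = w) (hv' : v = u' ∨ v = w') (h : G.inci v ∩ p'.edgeSet ⊆ p.edgeSet) :
    G.inci v ∩ p'.edgeSet = G.inci v ∩ p.edgeSet := by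
  obtain ⟨e, he⟩ := exists_inci_inter_edgeSet_eq_singleton hp huw hv
  obtain ⟨e', he'⟩ := exists_inci_inter_edgeSet_eq_singleton hp' huw' hv'
  have : {e'} ⊆ ({e} : Set E) := by
    rw [← he, ← he']; exact Set.subset_inter Set.inter_subset_left h
  rw [he, he', Set.singleton_subset_singleton.mp this]

theorem exists_walk_of_mem_support : ∀ {u w : V} (p : G.Walk u w) {x : V}, x ∈ p.support →
    ∃ q : G.Walk x w, q.support.Sublist p.support ∧ q.darts ⊆ p.darts
  | _, _, .nil _, _, hx => by
    obtain rfl := List.mem_singleton.mp hx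
    exact ⟨nil _, List.Sublist.refl _, List.Subset.refl _⟩
  | _, _, .cons _ _ p, _, hx => by
    rcases List.mem_cons.mp hx with rfl | hx
    · exact ⟨_, List.Sublist.refl _, List.Subset.refl _⟩
    · obtain ⟨q, hsub, hd⟩ := exists_walk_of_mem_support p hx
      exact ⟨q, hsub.cons _, List.Subset.trans hd (List.subset_cons_self _ _)⟩

theorem exists_support_nodup : ∀ {u w : V} (p : G.Walk u w),
    ∃ q : G.Walk u w, q.support.Nodup ∧ q.darts ⊆ p.darts
  | _, _, .nil v => ⟨nil v, List.nodup_singleton v, List.Subset.refl _⟩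
  | u, _, .cons e he p => by
    obtain ⟨q, hq, hqp⟩ := exists_support_nodup p
    by_cases hu : u ∈ q.support
    · obtain ⟨r, hsub, hr⟩ := exists_walk_of_mem_support q hu
      exact ⟨r, hsub.nodup hq,
        List.Subset.trans hr (List.Subset.trans hqp (List.subset_cons_self _ _))⟩
    · exact ⟨cons e he q, List.nodup_cons.mpr ⟨hu, hq⟩, List.cons_subset_cons _ hqp⟩

theorem exists_eq_append_cons_of_mem_darts : ∀ {u w : V} {p : G.Walk u w} {d : Dart V E},
    d ∈ p.darts → ∃ (p₁ : G.Walk u d.src) (he : G.inc d.edge = s(d.src, d.tgt))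
      (p₂ : G.Walk d.tgt w), p = p₁.append (cons d.edge he p₂)
  | _, _, .nil _, _, h => by simp at h
  | _, _, .cons e he p, _, h => by
    rcases List.mem_cons.mp h with rfl | h
    · exact ⟨nil _, he, p, rfl⟩
    · obtain ⟨p₁, he', p₂, rfl⟩ := exists_eq_append_cons_of_mem_darts h
      exact ⟨cons e he p₁, he', p₂, rfl⟩

theorem exists_split_last {B : E → Prop} :
    ∀ {u w : V} (p : G.Walk u w), (∃ e ∈ p.edges, B e) →
    ∃ (a b : V) (p₁ : G.Walk u a) (e : E) (he : G.inc e = s(a, b)) (p₂ : G.Walk b w),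
      p = p₁.append (cons e he p₂) ∧ B e ∧ ∀ f ∈ p₂.edges, ¬ B f
  | _, _, .nil _, ⟨_, h, _⟩ => by simp [edges] at h
  | _, _, .cons f hf p, h => by
    by_cases hp : ∃ e ∈ p.edges, B e
    · obtain ⟨a, b, p₁, e, he, p₂, rfl, hB, hlast⟩ := exists_split_last p hp
      exact ⟨a, b, cons f hf p₁, e, he, p₂, rfl, hB, hlast⟩
    · obtain ⟨e, he, hB⟩ := h
      rcases List.mem_cons.mp he with rfl | he
      · exact ⟨_, _, nil _, e, hf, p, rfl, hB, fun f hf hBf => hp ⟨f, hf, hBf⟩⟩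
      · exact absurd ⟨e, he, hB⟩ hp

theorem exists_walk_of_reflTransGen {D : Dart V E → Prop}
    (h : Relation.ReflTransGen (fun a b => ∃ e, G.inc e = s(a, b) ∧ D ⟨e, a, b⟩) u w) :
    ∃ p : G.Walk u w, ∀ d ∈ p.darts, D d := by
  induction h using Relation.ReflTransGen.head_induction_on with
  | refl => exact ⟨nil _, by simp⟩
  | head hstep _ ih =>
    obtain ⟨e, he, hD⟩ := hstep
    obtain ⟨p, hp⟩ := ih
    exact ⟨cons e he p, by simpa [hD] using hp⟩

theorem support_subset_compl {X : Set V} : ∀ {u w : V} (p : G.Walk u w), u ∉ X →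
    (∀ d ∈ p.darts, d.tgt ∈ X → d.src ∈ X) → ∀ z ∈ p.support, z ∉ X
  | _, _, .nil _, hu, _, _, hz => List.mem_singleton.mp hz ▸ hu
  | _, _, .cons _ _ p, hu, hX, z, hz => by
    rcases List.mem_cons.mp hz with rfl | hz
    · exact hu
    · exact support_subset_compl p (fun hx => hu (hX _ List.mem_cons_self hx))
        (fun d hd => hX d (List.mem_cons_of_mem _ hd)) z hz

theorem existsUnique_mem_cut {X : Set V} : ∀ {u w : V} (p : G.Walk u w), u ∈ X → w ∉ X →
    (∀ d ∈ p.darts, d.tgt ∈ X → d.src ∈ X) → ∃! e, e ∈ G.cut X ∧ e ∈ p.edges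
  | _, _, .nil _, hu, hw, _ => absurd hu hw
  | u, _, @cons _ _ _ _ x _ f hf p, hu, hw, hX => by
    have hXp : ∀ d ∈ p.darts, d.tgt ∈ X → d.src ∈ X := fun d hd => hX d (List.mem_cons_of_mem _ hd)
    by_cases hx : x ∈ X
    · have hf : f ∉ G.cut X := by simp [mem_cut_iff_of_inc_eq hf, hu, hx]
      obtain ⟨e, ⟨he, hep⟩, huniq⟩ := existsUnique_mem_cut p hx hw hXp
      refine ⟨e, ⟨he, List.mem_cons_of_mem _ hep⟩, fun e' ⟨he', he'p⟩ => ?_⟩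
      rcases List.mem_cons.mp he'p with rfl | he'p
      exacts [absurd he' hf, huniq e' ⟨he', he'p⟩]
    · refine ⟨f, ⟨⟨u, x, hf, hu, hx⟩, List.mem_cons_self⟩, fun e' ⟨he', he'p⟩ => ?_⟩
      rcases List.mem_cons.mp he'p with rfl | he'p
      · rfl
      · obtain ⟨x', y', he'', hx', hy'⟩ := he'
        exact absurd hx' (support_subset_compl p hx hXp x'
          (mem_support_of_mem_edges he'p (he''.symm ▸ Sym2.mem_mk_left _ _)))

theorem edgeSet_append (p : G.Walk u v) (q : G.Walk v w) :
    (p.append q).edgeSet = p.edgeSet ∪ q.edgeSet := by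
  ext; simp [edges_append]

theorem edgeSet_subset_of_darts_subset {u' w' : V} {p : G.Walk u w} {q : G.Walk u' w'}
    (h : p.darts ⊆ q.darts) : p.edgeSet ⊆ q.edgeSet := by
  intro e he
  obtain ⟨d, hd, rfl⟩ := mem_edges_iff.mp he
  exact mem_edges_iff.mpr ⟨d, h hd, rfl⟩

theorem support_append_cons {a b : V} (p : G.Walk u a) {e : E} (he : G.inc e = s(a, b))
    (q : G.Walk b w) : (p.append (cons e he q)).support = p.support ++ q.support := by
  rw [support_append, support_cons, List.tail_cons]

theorem edges_append_cons {a b : V} (p : G.Walk u a) {e : E} (he : G.inc e = s(a, b))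
    (q : G.Walk b w) : (p.append (cons e he q)).edges = p.edges ++ e :: q.edges := by
  rw [edges_append, edges_cons]

theorem darts_append_cons {a b : V} (p : G.Walk u a) {e : E} (he : G.inc e = s(a, b))
    (q : G.Walk b w) : (p.append (cons e he q)).darts = p.darts ++ ⟨e, a, b⟩ :: q.darts := by
  rw [darts_append, darts_cons]

theorem edgeSet_subset_append_cons_left {a b : V} (p : G.Walk u a) {e : E}
    (he : G.inc e = s(a, b)) (q : G.Walk b w) : p.edgeSet ⊆ (p.append (cons e he q)).edgeSet :=
  fun _ hf => by rw [mem_edgeSet, edges_append_cons]; exact List.mem_append_left _ hf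

theorem edgeSet_subset_append_cons_right {a b : V} (p : G.Walk u a) {e : E}
    (he : G.inc e = s(a, b)) (q : G.Walk b w) : q.edgeSet ⊆ (p.append (cons e he q)).edgeSet :=
  fun _ hf => by
    rw [mem_edgeSet, edges_append_cons]; exact List.mem_append_right _ (List.mem_cons_of_mem _ hf)

theorem inci_inter_edgeSet_subset_left {u₁ w₁ u₂ w₂ : V} {p : G.Walk u w} {q₁ : G.Walk u₁ w₁}
    {q₂ : G.Walk u₂ w₂} (h : p.edgeSet ⊆ q₁.edgeSet ∪ q₂.edgeSet) (hv : v ∉ q₂.support) :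
    G.inci v ∩ p.edgeSet ⊆ q₁.edgeSet :=
  fun _ ⟨hfv, hf⟩ => (h hf).resolve_right fun hf₂ => hv (mem_support_of_mem_edges hf₂ hfv)

theorem inci_inter_edgeSet_subset_right {u₁ w₁ u₂ w₂ : V} {p : G.Walk u w} {q₁ : G.Walk u₁ w₁}
    {q₂ : G.Walk u₂ w₂} (h : p.edgeSet ⊆ q₁.edgeSet ∪ q₂.edgeSet) (hv : v ∉ q₁.support) :
    G.inci v ∩ p.edgeSet ⊆ q₂.edgeSet :=
  fun _ ⟨hfv, hf⟩ => (h hf).resolve_left fun hf₁ => hv (mem_support_of_mem_edges hf₁ hfv)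

theorem mem_darts_or_edge_not_mem_edges {u' w' : V} {p : G.Walk u w} {r : G.Walk u' w'}
    (hr : r.edges.Nodup) (hp : p.darts ⊆ r.darts) {d : Dart V E} (hd : d ∈ r.darts) :
    d ∈ p.darts ∨ d.edge ∉ p.edges := by
  refine or_iff_not_imp_right.mpr fun h => ?_
  obtain ⟨d', hd', hdd'⟩ := mem_edges_iff.mp (not_not.mp h)
  rwa [← eq_of_edge_eq hr (hp hd') hd hdd']

end Walk

variable {s t : V}

open Walk

def pathEdges (P : Set (G.STPath s t)) : Set E := {e | ∃ p ∈ P, e ∈ p.walk.edges}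

theorem pathEdges_insert (p : G.STPath s t) (P : Set (G.STPath s t)) :
    pathEdges (insert p P) = p.walk.edgeSet ∪ pathEdges P := by
  ext; simp [pathEdges]

theorem pathEdges_eq_union_diff {P : Set (G.STPath s t)} {q : G.STPath s t} (hq : q ∈ P) :
    pathEdges P = q.walk.edgeSet ∪ pathEdges (P \ {q}) := by
  rw [← pathEdges_insert, Set.insert_sdiff_singleton, Set.insert_eq_of_mem hq]

theorem edgeSet_subset_pathEdges {P : Set (G.STPath s t)} {q : G.STPath s t} (hqP : q ∈ P) :
    q.walk.edgeSet ⊆ pathEdges P :=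
  fun _ he => ⟨q, hqP, he⟩

theorem pathEdges_mono {P Q : Set (G.STPath s t)} (h : P ⊆ Q) : pathEdges P ⊆ pathEdges Q :=
  fun _ ⟨p, hp, he⟩ => ⟨p, h hp, he⟩

theorem STPathDisjoint.mono {P Q : Set (G.STPath s t)} (hP : G.STPathDisjoint P) (h : Q ⊆ P) :
    G.STPathDisjoint Q :=
  fun p hp q hq => hP p (h hp) q (h hq)

theorem STPathDisjoint.disjoint_diff {P : Set (G.STPath s t)} {q : G.STPath s t}
    (hP : G.STPathDisjoint P) (hq : q ∈ P) : Disjoint q.walk.edgeSet (pathEdges (P \ {q})) := by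
  rw [Set.disjoint_left]
  rintro e he ⟨p, ⟨hp, hpq⟩, hep⟩
  exact hP q hq p hp (Ne.symm hpq) e he hep

theorem STPathDisjoint.insert_of_disjoint {P : Set (G.STPath s t)} {p : G.STPath s t}
    (hP : G.STPathDisjoint P) (h : Disjoint p.walk.edgeSet (pathEdges P)) :
    G.STPathDisjoint (insert p P) := by
  have hp : ∀ q ∈ P, ∀ e ∈ p.walk.edges, e ∉ q.walk.edges :=
    fun q hq e he heq => Set.disjoint_left.mp h he ⟨q, hq, heq⟩
  rintro q₁ (rfl | hq₁) q₂ (rfl | hq₂) hne e he₁ he₂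
  · exact hne rfl
  · exact hp q₂ hq₂ e he₁ he₂
  · exact hp q₁ hq₁ e he₂ he₁
  · exact hP q₁ hq₁ q₂ hq₂ hne e he₁ he₂

theorem STPathDisjoint.insert_diff {P : Set (G.STPath s t)} {q p' : G.STPath s t} {F : Set E}
    (hP : G.STPathDisjoint P) (hq : q ∈ P) (hF : Disjoint F (pathEdges P))
    (hp' : p'.walk.edgeSet ⊆ q.walk.edgeSet ∪ F) : G.STPathDisjoint (insert p' (P \ {q})) :=
  (hP.mono Set.sdiff_subset).insert_of_disjoint <| Disjoint.mono_left hp' <|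
    (hP.disjoint_diff hq).union_left (hF.mono_right (pathEdges_mono Set.sdiff_subset))

/-- A dart of the residual graph of `P`. -/
def IsResidual (P : Set (G.STPath s t)) (d : Dart V E) : Prop :=
  d.edge ∉ pathEdges P ∨ ∃ p ∈ P, d.symm ∈ p.walk.darts

/-- No path of `P` enters `s` or leaves `t`. -/
theorem IsResidual.edge_not_mem_pathEdges {P : Set (G.STPath s t)} {d : Dart V E}
    (h : IsResidual P d) (hd : d.src = s ∨ d.tgt = t) : d.edge ∉ pathEdges P := by
  refine h.resolve_right ?_
  rintro ⟨p, -, hp⟩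
  rcases hd with hd | hd
  · exact tgt_ne_start p.support_nodup hp hd
  · exact src_ne_end p.support_nodup hp hd

/- The exchange step: `W = w₁ e w₂` is a residual path whose last edge `e` in `P` is used
backwards by `q = q₁ e q₂ ∈ P`; `q` is replaced by a path `p'` inside `q₁ w₂` and `W` by a
residual path `W'` inside `w₁ q₂`. -/
section Swap

variable {a b : V} {P : Set (G.STPath s t)} {q p' : G.STPath s t} {e : E}
  {w₁ : G.Walk s a} {w₂ : G.Walk b t} {q₁ : G.Walk s b} {q₂ : G.Walk a t}
  {he : G.inc e = s(a, b)} {he' : G.inc e = s(b, a)}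

theorem disjoint_edgeSet_pathEdges_swap (hP : G.STPathDisjoint P) (hqP : q ∈ P)
    (hq : q.walk = q₁.append (cons e he' q₂)) (hw₂ : Disjoint w₂.edgeSet (pathEdges P))
    (hp' : p'.walk.darts ⊆ (q₁.append w₂).darts) :
    Disjoint q₂.edgeSet (pathEdges (insert p' (P \ {q}))) := by
  have hqe := edges_nodup_of_support_nodup q.support_nodup
  have hq₂ : q₂.edgeSet ⊆ q.walk.edgeSet := hq ▸ edgeSet_subset_append_cons_right _ _ _
  rw [hq, edges_append_cons, List.nodup_append] at hqe
  rw [pathEdges_insert, Set.disjoint_union_right]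
  refine ⟨Disjoint.mono_right ((edgeSet_subset_of_darts_subset hp').trans
    (edgeSet_append _ _).subset) (Set.disjoint_union_right.mpr ⟨?_, ?_⟩),
    (hP.disjoint_diff hqP).mono_left hq₂⟩
  · exact Set.disjoint_right.mpr fun f hf₁ hf₂ => hqe.2.2 f hf₁ f (List.mem_cons_of_mem _ hf₂) rfl
  · exact (hw₂.mono_right ((hq₂.trans (edgeSet_subset_pathEdges hqP)))).symm

theorem edgeSet_subset_swap (hq : q.walk = q₁.append (cons e he' q₂))
    (hp' : p'.walk.darts ⊆ (q₁.append w₂).darts) :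
    p'.walk.edgeSet ⊆ q.walk.edgeSet ∪ w₂.edgeSet := by
  exact ((edgeSet_subset_of_darts_subset hp').trans (edgeSet_append _ _).subset).trans
    (Set.union_subset_union_left _ (hq ▸ edgeSet_subset_append_cons_left _ _ _))

theorem pathEdges_swap_subset (hqP : q ∈ P) (hq : q.walk = q₁.append (cons e he' q₂))
    (hp' : p'.walk.darts ⊆ (q₁.append w₂).darts) :
    pathEdges (insert p' (P \ {q})) ⊆ pathEdges P ∪ w₂.edgeSet := by
  rw [pathEdges_insert]
  exact Set.union_subset ((edgeSet_subset_swap hq hp').trans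
      (Set.union_subset_union_left _ (edgeSet_subset_pathEdges hqP)))
    (Set.subset_union_of_subset_left (pathEdges_mono Set.sdiff_subset) _)

theorem isResidual_swap (hP : G.STPathDisjoint P) (hqP : q ∈ P)
    (hq : q.walk = q₁.append (cons e he' q₂)) (hW : (w₁.append (cons e he w₂)).edges.Nodup)
    (hres : ∀ d ∈ w₁.darts, IsResidual P d) (hw₂ : Disjoint w₂.edgeSet (pathEdges P))
    (hp' : p'.walk.darts ⊆ (q₁.append w₂).darts) {d : Dart V E}
    (hd : d ∈ (w₁.append q₂).darts) : IsResidual (insert p' (P \ {q})) d := by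
  have hq₂ := disjoint_edgeSet_pathEdges_swap hP hqP hq hw₂ hp'
  have hqe := edges_nodup_of_support_nodup q.support_nodup
  rw [hq, edges_append_cons, List.nodup_append] at hqe
  rw [edges_append_cons, List.nodup_append] at hW
  rw [darts_append, List.mem_append] at hd
  rcases hd with hd | hd
  swap
  · exact Or.inl (Set.disjoint_left.mp hq₂ (mem_edges_iff.mpr ⟨d, hd, rfl⟩))
  have hdw₁ : d.edge ∈ w₁.edges := mem_edges_iff.mpr ⟨d, hd, rfl⟩
  rcases hres d hd with hfree | ⟨r, hrP, hrd⟩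
  · exact Or.inl fun h => (pathEdges_swap_subset hqP hq hp' h).elim hfree
      fun h => hW.2.2 _ hdw₁ _ (List.mem_cons_of_mem _ h) rfl
  by_cases hrq : r = q
  swap
  · exact Or.inr ⟨r, Set.mem_insert_of_mem _ ⟨hrP, hrq⟩, hrd⟩
  subst hrq
  rw [hq, darts_append_cons, List.mem_append, List.mem_cons] at hrd
  rcases hrd with hrd | hrd | hrd
  · have hnd : (q₁.append w₂).edges.Nodup := by
      refine edges_append _ _ ▸ List.nodup_append.mpr ⟨hqe.1, (List.nodup_cons.mp hW.2.1).2, ?_⟩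
      rintro f hf _ hf' rfl
      exact Set.disjoint_left.mp hw₂ hf'
        (edgeSet_subset_pathEdges hrP (hq ▸ edgeSet_subset_append_cons_left _ _ _ hf))
    rcases mem_darts_or_edge_not_mem_edges hnd hp' (darts_append _ _ ▸ List.mem_append_left _ hrd)
      with h | h
    · exact Or.inr ⟨p', Set.mem_insert _ _, h⟩
    · rw [IsResidual, pathEdges_insert]
      refine Or.inl fun h' => h'.elim h fun h' => Set.disjoint_left.mp (hP.disjoint_diff hrP) ?_ h'
      exact hq ▸ edgeSet_subset_append_cons_left _ _ _ (mem_edges_iff.mpr ⟨_, hrd, rfl⟩)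
  · have hde : d.edge = e := congrArg Dart.edge hrd
    exact absurd hde (hW.2.2 _ hdw₁ _ List.mem_cons_self)
  · exact Or.inl (Set.disjoint_left.mp hq₂ (mem_edges_iff.mpr ⟨_, hrd, rfl⟩))

theorem edgeSet_inter_pathEdges_swap_ssubset (hP : G.STPathDisjoint P) (hqP : q ∈ P)
    (hq : q.walk = q₁.append (cons e he' q₂)) (hW : (w₁.append (cons e he w₂)).edges.Nodup)
    (hw₂ : Disjoint w₂.edgeSet (pathEdges P)) (hp' : p'.walk.darts ⊆ (q₁.append w₂).darts)
    {W' : G.Walk s t} (hW' : W'.darts ⊆ (w₁.append q₂).darts) :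
    W'.edgeSet ∩ pathEdges (insert p' (P \ {q})) ⊂
      (w₁.append (cons e he w₂)).edgeSet ∩ pathEdges P := by
  have hq₂ := disjoint_edgeSet_pathEdges_swap hP hqP hq hw₂ hp'
  have hP' := pathEdges_swap_subset hqP hq hp'
  have hW'e := (edgeSet_subset_of_darts_subset hW').trans (edgeSet_append _ _).subset
  have hqe := edges_nodup_of_support_nodup q.support_nodup
  rw [hq, edges_append_cons, List.nodup_append] at hqe
  rw [edges_append_cons, List.nodup_append] at hW
  have hsub : W'.edgeSet ∩ pathEdges (insert p' (P \ {q})) ⊆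
      (w₁.append (cons e he w₂)).edgeSet ∩ pathEdges P := by
    rintro f ⟨hfW', hfP'⟩
    have hfw₁ : f ∈ w₁.edgeSet :=
      (hW'e hfW').resolve_right fun hf => Set.disjoint_left.mp hq₂ hf hfP'
    refine ⟨edgeSet_subset_append_cons_left _ _ _ hfw₁, (hP' hfP').resolve_right fun hf => ?_⟩
    exact hW.2.2 _ hfw₁ _ (List.mem_cons_of_mem _ hf) rfl
  refine (Set.ssubset_iff_of_subset hsub).mpr ⟨e, ⟨?_, ⟨q, hqP, ?_⟩⟩, fun ⟨he, _⟩ => ?_⟩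
  · rw [mem_edgeSet, edges_append_cons]; simp
  · rw [hq, edges_append_cons]; simp
  · rcases hW'e he with he | he
    · exact hW.2.2 _ he _ List.mem_cons_self rfl
    · exact (List.nodup_cons.mp hqe.2.1).1 he

theorem inci_inter_union_swap (hst : s ≠ t) (hqP : q ∈ P) (hq : q.walk = q₁.append (cons e he' q₂))
    (hW : (w₁.append (cons e he w₂)).support.Nodup) (hp' : p'.walk.darts ⊆ (q₁.append w₂).darts)
    {W' : G.Walk s t} (hW'n : W'.support.Nodup) (hW' : W'.darts ⊆ (w₁.append q₂).darts)
    {v : V} (hv : v = s ∨ v = t) :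
    G.inci v ∩ (pathEdges (insert p' (P \ {q})) ∪ W'.edgeSet) =
      G.inci v ∩ (pathEdges P ∪ (w₁.append (cons e he w₂)).edgeSet) := by
  have hqs := q.support_nodup
  rw [hq, support_append_cons] at hqs
  have hWs := hW
  rw [support_append_cons] at hWs
  have hp'e := (edgeSet_subset_of_darts_subset hp').trans (edgeSet_append _ _).subset
  have hW'e := (edgeSet_subset_of_darts_subset hW').trans (edgeSet_append _ _).subset
  rw [pathEdges_insert, pathEdges_eq_union_diff hqP]
  simp only [Set.inter_union_distrib_left]
  rcases hv with rfl | rfl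
  · rw [inci_inter_edgeSet_eq q.support_nodup p'.support_nodup hst hst (.inl rfl) (.inl rfl)
      ((inci_inter_edgeSet_subset_left hp'e
        (List.disjoint_of_nodup_append hWs (start_mem_support w₁))).trans
        (hq ▸ edgeSet_subset_append_cons_left _ _ _)),
      inci_inter_edgeSet_eq hW hW'n hst hst (.inl rfl) (.inl rfl)
      ((inci_inter_edgeSet_subset_left hW'e
        (List.disjoint_of_nodup_append hqs (start_mem_support q₁))).trans
        (edgeSet_subset_append_cons_left _ _ _))]
  · rw [inci_inter_edgeSet_eq hW p'.support_nodup hst hst (.inr rfl) (.inr rfl)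
      ((inci_inter_edgeSet_subset_right hp'e
        fun h => List.disjoint_of_nodup_append hqs h (end_mem_support q₂)).trans
        (edgeSet_subset_append_cons_right _ _ _)),
      inci_inter_edgeSet_eq q.support_nodup hW'n hst hst (.inr rfl) (.inr rfl)
      ((inci_inter_edgeSet_subset_right hW'e
        fun h => List.disjoint_of_nodup_append hWs h (end_mem_support w₂)).trans
        (hq ▸ edgeSet_subset_append_cons_right _ _ _))]
    ac_rfl

end Swap

variable {P : Set (G.STPath s t)}

theorem exists_swap (hst : s ≠ t) (hP : G.STPathDisjoint P) {W : G.Walk s t}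
    (hW : W.support.Nodup) (hres : ∀ d ∈ W.darts, IsResidual P d)
    (hused : ∃ e ∈ W.edges, e ∈ pathEdges P) :
    ∃ (P' : Set (G.STPath s t)) (W' : G.Walk s t), G.STPathDisjoint P' ∧ W'.support.Nodup ∧
      (∀ d ∈ W'.darts, IsResidual P' d) ∧ W'.edgeSet ∩ pathEdges P' ⊂ W.edgeSet ∩ pathEdges P ∧
      ∀ v, v = s ∨ v = t →
        G.inci v ∩ (pathEdges P' ∪ W'.edgeSet) = G.inci v ∩ (pathEdges P ∪ W.edgeSet) := by
  obtain ⟨a, b, w₁, e, he, w₂, rfl, heP, hw₂⟩ := exists_split_last W hused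
  have hw₂' : Disjoint w₂.edgeSet (pathEdges P) := Set.disjoint_left.mpr hw₂
  obtain ⟨q, hqP, hqd⟩ : ∃ q ∈ P, (⟨e, b, a⟩ : Dart V E) ∈ q.walk.darts :=
    (hres ⟨e, a, b⟩ (by rw [darts_append_cons]; simp)).resolve_left (not_not.mpr heP)
  obtain ⟨q₁, he', q₂, hq⟩ : ∃ (q₁ : G.Walk s b) (he' : G.inc e = s(b, a)) (q₂ : G.Walk a t),
      q.walk = q₁.append (cons e he' q₂) := exists_eq_append_cons_of_mem_darts hqd
  obtain ⟨p', hp', hp'd⟩ := exists_support_nodup (q₁.append w₂)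
  obtain ⟨W', hW', hW'd⟩ := exists_support_nodup (w₁.append q₂)
  have hWe := edges_nodup_of_support_nodup hW
  have hres₁ : ∀ d ∈ w₁.darts, IsResidual P d := fun d hd =>
    hres d (by rw [darts_append_cons]; exact List.mem_append_left _ hd)
  exact ⟨insert ⟨p', hp'⟩ (P \ {q}), W', hP.insert_diff hqP hw₂' (edgeSet_subset_swap hq hp'd),
    hW', fun d hd => isResidual_swap hP hqP hq hWe hres₁ hw₂' hp'd (hW'd hd),
    edgeSet_inter_pathEdges_swap_ssubset hP hqP hq hWe hw₂' hp'd hW'd,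
    fun v hv => inci_inter_union_swap hst hqP hq hW hp'd hW' hW'd hv⟩

theorem exists_augment (hst : s ≠ t) (hP : G.STPathDisjoint P) {W : G.Walk s t}
    (hW : W.support.Nodup) (hres : ∀ d ∈ W.darts, IsResidual P d) :
    ∃ Q : Set (G.STPath s t), G.STPathDisjoint Q ∧ ∀ v, v = s ∨ v = t →
      G.inci v ∩ pathEdges Q = G.inci v ∩ (pathEdges P ∪ W.edgeSet) := by
  induction hn : (W.edgeSet ∩ pathEdges P).ncard using Nat.strong_induction_on
    generalizing P W with
  | _ n ih =>
    by_cases hfree : Disjoint W.edgeSet (pathEdges P)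
    · refine ⟨insert ⟨W, hW⟩ P, hP.insert_of_disjoint hfree, fun v _ => ?_⟩
      rw [pathEdges_insert, Set.union_comm]
    · obtain ⟨P', W', hP', hW', hres', hlt, hv⟩ :=
        exists_swap hst hP hW hres (Set.not_disjoint_iff.mp hfree)
      have hlt' := hn ▸ Set.ncard_lt_ncard hlt ((List.finite_toSet _).inter_of_left _)
      obtain ⟨Q, hQ, hQv⟩ := ih _ hlt' hP' hW' hres' rfl
      exact ⟨Q, hQ, fun v hv' => (hQv v hv').trans (hv v hv')⟩

def residualReach (P : Set (G.STPath s t)) : Set V :=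
  {x | Relation.ReflTransGen (fun a b => ∃ e, G.inc e = s(a, b) ∧ IsResidual P ⟨e, a, b⟩) s x}

theorem exists_residual_path (ht : t ∈ residualReach P) :
    ∃ W : G.Walk s t, W.support.Nodup ∧ ∀ d ∈ W.darts, IsResidual P d := by
  obtain ⟨W₀, hW₀⟩ := exists_walk_of_reflTransGen ht
  obtain ⟨W, hW, hWW₀⟩ := exists_support_nodup W₀
  exact ⟨W, hW, fun d hd => hW₀ d (hWW₀ hd)⟩

/-- A path of `P` never enters the residual-reachable set: the reverse of that step would be
residual. -/
theorem existsUnique_mem_cut_residualReach (ht : t ∉ residualReach P) {p : G.STPath s t}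
    (hp : p ∈ P) : ∃! e, e ∈ G.cut (residualReach P) ∧ e ∈ p.walk.edges :=
  existsUnique_mem_cut p.walk Relation.ReflTransGen.refl ht fun d hd hx =>
    hx.tail ⟨d.edge, (inc_of_mem_darts hd).trans Sym2.eq_swap, .inr ⟨p, hp, hd⟩⟩

theorem mem_pathEdges_of_mem_cut_residualReach {e : E} (he : e ∈ G.cut (residualReach P)) :
    e ∈ pathEdges P := by
  obtain ⟨x, y, hxy, hx, hy⟩ := he
  by_contra h
  exact hy (hx.tail ⟨e, hxy, .inl h⟩)

theorem exists_inci_inter_eq_insert (hst : s ≠ t) {W : G.Walk s t} (hW : W.support.Nodup)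
    (hres : ∀ d ∈ W.darts, IsResidual P d) {v : V} (hv : v = s ∨ v = t) {F : Set E}
    (hF : G.inci v ∩ F = G.inci v ∩ (pathEdges P ∪ W.edgeSet)) :
    ∃ e ∈ G.inci v, (∀ p ∈ P, e ∉ p.walk.edges) ∧
      G.inci v ∩ F = insert e (G.inci v ∩ pathEdges P) := by
  obtain ⟨e, he⟩ := exists_inci_inter_edgeSet_eq_singleton hW hst hv
  obtain ⟨hev, heW⟩ : e ∈ G.inci v ∩ W.edgeSet := he ▸ rfl
  obtain ⟨d, hd, rfl⟩ := mem_edges_iff.mp heW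
  have hfree : d.edge ∉ pathEdges P := by
    refine (hres d hd).edge_not_mem_pathEdges ?_
    rcases hv with rfl | rfl
    exacts [.inl (src_eq_start_of_mem_inc hW hd hev), .inr (tgt_eq_end_of_mem_inc hW hd hev)]
  refine ⟨d.edge, hev, fun p hp hdp => hfree ⟨p, hp, hdp⟩, ?_⟩
  rw [hF, Set.inter_union_distrib_left, he, Set.union_singleton]

end Multigraph

/-- **Augmenting path lemma.** For a system `P` of pairwise edge-disjoint
`st`-paths, either some `st`-cut is orthogonal to `P`, or there is a system `Q`
of pairwise edge-disjoint `st`-paths with `δ_Q(s) ⊋ δ_P(s)` and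
`δ_Q(t) ⊋ δ_P(t)`, each with exactly one new edge. -/
theorem augmenting_path {V : Type u} {E : Type v} (G : Multigraph V E)
    (s t : V) (hst : s ≠ t) (P : Set (G.STPath s t))
    (hP : G.STPathDisjoint P) :
    (∃ C : Set E, (∃ X : Set V, s ∈ X ∧ t ∉ X ∧ C = G.cut X) ∧
      (∀ p ∈ P, ∃! e, e ∈ C ∧ e ∈ p.walk.edges) ∧
      (∀ e ∈ C, ∃ p ∈ P, e ∈ p.walk.edges)) ∨
    (∃ Q : Set (G.STPath s t), G.STPathDisjoint Q ∧
      (∃ e ∈ G.inci s, (∀ p ∈ P, e ∉ p.walk.edges) ∧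
        {f | f ∈ G.inci s ∧ ∃ q ∈ Q, f ∈ q.walk.edges} =
          insert e {f | f ∈ G.inci s ∧ ∃ p ∈ P, f ∈ p.walk.edges}) ∧
      (∃ e ∈ G.inci t, (∀ p ∈ P, e ∉ p.walk.edges) ∧
        {f | f ∈ G.inci t ∧ ∃ q ∈ Q, f ∈ q.walk.edges} =
          insert e {f | f ∈ G.inci t ∧ ∃ p ∈ P, f ∈ p.walk.edges})) := by
  by_cases ht : t ∈ G.residualReach P
  · obtain ⟨W, hW, hres⟩ := G.exists_residual_path ht
    obtain ⟨Q, hQ, hQv⟩ := G.exists_augment hst hP hW hres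
    exact .inr ⟨Q, hQ, G.exists_inci_inter_eq_insert hst hW hres (.inl rfl) (hQv s (.inl rfl)),
      G.exists_inci_inter_eq_insert hst hW hres (.inr rfl) (hQv t (.inr rfl))⟩
  · exact .inl ⟨_, ⟨_, .refl, ht, rfl⟩, fun p hp => G.existsUnique_mem_cut_residualReach ht hp,
      fun e he => G.mem_pathEdges_of_mem_cut_residualReach he⟩
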